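/- Let p_1,…,p_k be positive integers with k ≥ 2 and n = p_1 + ⋯ + p_k. Let L_i, L_i′ ⊆ [p_i] for i = 2,…,k with L_i ≠ L_i′ for at least one i. If w ∈ B_{p_1} × B_{p_2,L_2} × ⋯ × B_{p_k,L_k} and w′ ∈ B_{p_1} × B_{p_2,L_2′} × ⋯ × B_{p_k,L_k′} satisfy w < w′ in the weak order on B_n, then ℓ(w′) − ℓ(w) ≥ 3. -/

import Mathlib

open Finset

open scoped Classical

/-- The hyperoctahedral group `𝔅ₙ`, realized as the set of those permutations `w` of `ℤ`
that satisfy `w (-i) = - w i` for all `i` and fix every integer of absolute value `> n`.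
One-line notation: `w₁ ⋯ w_n` with `w_i = w i` for `1 ≤ i ≤ n`. -/
def SignedPerm (n : ℕ) : Set (Equiv.Perm ℤ) :=
  {w | (∀ i : ℤ, w (-i) = - w i) ∧ (∀ i : ℤ, (n : ℤ) < |i| → w i = i)}

/-- The inversion set `Inv(w) = {(i,j) : 1 ≤ i < j ≤ n, w_i > w_j}`. -/
noncomputable def InvSet (n : ℕ) (w : Equiv.Perm ℤ) : Finset (ℤ × ℤ) :=
  ((Finset.Icc (1 : ℤ) (n : ℤ)) ×ˢ (Finset.Icc (1 : ℤ) (n : ℤ))).filter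
    fun p => p.1 < p.2 ∧ w p.2 < w p.1

/-- The set of negative indices `Nega(w) = {i ∈ [n] : w_i < 0}`. -/
noncomputable def NegaSet (n : ℕ) (w : Equiv.Perm ℤ) : Finset ℤ :=
  (Finset.Icc (1 : ℤ) (n : ℤ)).filter fun i => w i < 0

/-- The negative sum pair set `Nsp(w) = {(i,j) : 1 ≤ i < j ≤ n, w_i + w_j < 0}`. -/
noncomputable def NspSet (n : ℕ) (w : Equiv.Perm ℤ) : Finset (ℤ × ℤ) :=
  ((Finset.Icc (1 : ℤ) (n : ℤ)) ×ˢ (Finset.Icc (1 : ℤ) (n : ℤ))).filter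
    fun p => p.1 < p.2 ∧ w p.1 + w p.2 < 0

/-- The Coxeter length of `w ∈ 𝔅ₙ`: `ℓ(w) = #Inv(w) + #Nega(w) + #Nsp(w)`. -/
noncomputable def blen (n : ℕ) (w : Equiv.Perm ℤ) : ℕ :=
  (InvSet n w).card + (NegaSet n w).card + (NspSet n w).card

/-- The left weak order on `𝔅ₙ`: `u ≤ v` iff `ℓ(v) = ℓ(u) + ℓ(v * u⁻¹)`. -/
def wle (n : ℕ) (u v : Equiv.Perm ℤ) : Prop :=
  blen n v = blen n u + blen n (v * u⁻¹)

/-- The Coxeter generators of `𝔅ₙ`: `s₀ = (1,-1)` and `sᵢ = (i,i+1)(-i,-(i+1))` for `i ≥ 1`. -/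
def sB (i : ℕ) : Equiv.Perm ℤ :=
  if i = 0 then Equiv.swap 1 (-1)
  else Equiv.swap (i : ℤ) ((i : ℤ) + 1) * Equiv.swap (-(i : ℤ)) (-((i : ℤ) + 1))

/-- `a[p] = a + p` if `a > 0`, `a - p` if `a < 0` (and `0 ↦ 0`). -/
def shiftFun (p : ℕ) (b : ℤ) : ℤ :=
  if 0 < b then b + (p : ℤ) else if b < 0 then b - (p : ℤ) else 0

/-- `w` is the shifted product `u × v ∈ 𝔅_{p+q}` of `u ∈ 𝔅_p` and `v ∈ 𝔅_q`:
its one-line notation is `(u₁, …, u_p, v₁[p], …, v_q[p])`. -/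
def IsSProd (p q : ℕ) (u v w : Equiv.Perm ℤ) : Prop :=
  w ∈ SignedPerm (p + q) ∧
  (∀ a : ℤ, 1 ≤ a → a ≤ (p : ℤ) → w a = u a) ∧
  (∀ a : ℤ, (p : ℤ) < a → a ≤ (p : ℤ) + (q : ℤ) → w a = shiftFun p (v (a - (p : ℤ))))

/-- `ξ` is a `(p,q)`-shuffle: an element of `𝔅_{p+q}` with positive entries (a permutation)
that is increasing on each of the blocks `[1,p]` and `[p+1,p+q]`. -/
def IsShuffle (p q : ℕ) (ξ : Equiv.Perm ℤ) : Prop :=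
  ξ ∈ SignedPerm (p + q) ∧
  (∀ a : ℤ, 1 ≤ a → a ≤ (p : ℤ) + (q : ℤ) → 0 < ξ a) ∧
  (∀ a b : ℤ, 1 ≤ a → a < b → b ≤ (p : ℤ) → ξ a < ξ b) ∧
  (∀ a b : ℤ, (p : ℤ) < a → a < b → b ≤ (p : ℤ) + (q : ℤ) → ξ a < ξ b)

/-- `w` is the standard signed permutation `sts(a₁ ⋯ a_m)` of the word `a₁ ⋯ a_m = a 1, …, a m`
(of nonzero integers): the unique `w ∈ 𝔅_m` with the same negative index set and
`|w_i| < |w_j| ↔ |a_i| ≤ |a_j|` for `1 ≤ i < j ≤ m`. -/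
def IsSts (m : ℕ) (a : ℤ → ℤ) (w : Equiv.Perm ℤ) : Prop :=
  w ∈ SignedPerm m ∧
  (∀ i : ℤ, 1 ≤ i → i ≤ (m : ℤ) → (w i < 0 ↔ a i < 0)) ∧
  (∀ i j : ℤ, 1 ≤ i → i < j → j ≤ (m : ℤ) → (|w i| < |w j| ↔ |a i| ≤ |a j|))

/-- The standard signed permutation of a word, as a function. -/
noncomputable def sts (m : ℕ) (a : ℤ → ℤ) : Equiv.Perm ℤ :=
  if h : ∃ w, IsSts m a w then h.choose else 1

/-- Descent set of `w ∈ 𝔅ₙ`: `Des(w) = {i ∈ [0,n-1] : w_i > w_{i+1}}` with `w₀ = 0`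
(note `w 0 = 0` holds automatically). -/
def DesSet (n : ℕ) (w : Equiv.Perm ℤ) : Finset ℕ :=
  (Finset.range n).filter fun i => w ((i : ℤ) + 1) < w (i : ℤ)

/-- Global descent set of `u ∈ 𝔅ₙ`. -/
noncomputable def GDesSet (n : ℕ) (u : Equiv.Perm ℤ) : Finset ℕ :=
  (Finset.Ico 1 n).filter fun i =>
    ∀ j k : ℤ, 1 ≤ j → j ≤ (i : ℤ) → (i : ℤ) < k → k ≤ (n : ℤ) → u k < u j

/-- `m` is the meet (greatest lower bound) of `x` and `y` within `S`, w.r.t. the weak order. -/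
def IsMeetIn (n : ℕ) (S : Set (Equiv.Perm ℤ)) (x y m : Equiv.Perm ℤ) : Prop :=
  m ∈ S ∧ wle n m x ∧ wle n m y ∧ ∀ z ∈ S, wle n z x → wle n z y → wle n z m

/-- `j` is the join (least upper bound) of `x` and `y` within `S`, w.r.t. the weak order. -/
def IsJoinIn (n : ℕ) (S : Set (Equiv.Perm ℤ)) (x y j : Equiv.Perm ℤ) : Prop :=
  j ∈ S ∧ wle n x j ∧ wle n y j ∧ ∀ z ∈ S, wle n x z → wle n y z → wle n j z

/-- The set `𝔅_p × 𝔅_{q,K} ⊆ 𝔅_{p+q}` of shifted products `u × v` with `u ∈ 𝔅_p`,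
`v ∈ 𝔅_q`, `Nega(v) = K`. -/
def SProdComp (p q : ℕ) (K : Finset ℤ) : Set (Equiv.Perm ℤ) :=
  {w | ∃ u v : Equiv.Perm ℤ, u ∈ SignedPerm p ∧ v ∈ SignedPerm q ∧ NegaSet q v = K ∧
        IsSProd p q u v w}

/-- `w` is the iterated shifted product `u⁽¹⁾ × ⋯ × u⁽ᵏ⁾` of the list `us` of signed
permutations with block sizes given by the list `ps`. -/
def IsMultiSProd (ps : List ℕ) (us : List (Equiv.Perm ℤ)) (w : Equiv.Perm ℤ) : Prop :=
  w ∈ SignedPerm ps.sum ∧ us.length = ps.length ∧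
  ∀ i < ps.length,
    us.getD i 1 ∈ SignedPerm (ps.getD i 0) ∧
    ∀ a : ℤ, ((ps.take i).sum : ℤ) < a → a ≤ ((ps.take i).sum : ℤ) + (ps.getD i 0 : ℤ) →
      w a = shiftFun ((ps.take i).sum) ((us.getD i 1) (a - ((ps.take i).sum : ℤ)))

/-- The subset `𝔅_{p₁} × 𝔅_{p₂} × ⋯ × 𝔅_{p_k}` of `𝔅_{p₁+⋯+p_k}`. -/
def MultiProdSet (ps : List ℕ) : Set (Equiv.Perm ℤ) :=
  {w | ∃ us, IsMultiSProd ps us w}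

/-- The `(L₂,…,L_k)`-component `𝔅_{p₁} × 𝔅_{p₂,L₂} × ⋯ × 𝔅_{p_k,L_k}`, where
`Ls.getD (i-1) ∅` is the prescribed negative index set of the `(i+1)`-st factor. -/
def ComponentSet (ps : List ℕ) (Ls : List (Finset ℤ)) : Set (Equiv.Perm ℤ) :=
  {w | ∃ us, IsMultiSProd ps us w ∧
        ∀ i, 1 ≤ i → i < ps.length →
          NegaSet (ps.getD i 0) (us.getD i 1) = Ls.getD (i - 1) ∅}

/-- `ξ ∈ Sh(p₁,…,p_k)`: a permutation in `𝔅_{p₁+⋯+p_k}` (all entries positive)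
increasing on each consecutive block. -/
def IsMultiShuffle (ps : List ℕ) (ξ : Equiv.Perm ℤ) : Prop :=
  ξ ∈ SignedPerm ps.sum ∧
  (∀ a : ℤ, 1 ≤ a → a ≤ (ps.sum : ℤ) → 0 < ξ a) ∧
  ∀ i < ps.length, ∀ a b : ℤ,
    ((ps.take i).sum : ℤ) < a → a < b → b ≤ ((ps.take i).sum : ℤ) + (ps.getD i 0 : ℤ) →
      ξ a < ξ b

/-- A valid tuple `(L₂,…,L_k)` of prescribed negative index sets: `L_i ⊆ [p_i]`. -/
def ValidLs (ps : List ℕ) (Ls : List (Finset ℤ)) : Prop :=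
  Ls.length = ps.length - 1 ∧
  ∀ i < ps.length - 1, Ls.getD i ∅ ⊆ Finset.Icc (1 : ℤ) (ps.getD (i + 1) 0 : ℤ)

/-! Identify `w ∈ 𝔅ₙ` with its set of inverted positive roots `e_j - e_i` (`e_0 = 0`,
`e_{-k} = -e_k`): there are `ℓ(w)` of them, and the usual symmetric-difference argument shows
that `w ≤ w'` in the weak order makes the inverted roots of `w` inverted by `w'` too. In
particular `Nega(w) ⊆ Nega(w')`. Since the tuples differ, some entry `m` of a block `i ≥ 2`
has different signs in `w` and `w'`, so it is positive in `w` and negative in `w'`. Its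
position `a` lies behind the first block, so the shift makes `|w_a|, |w'_a| > p₁`, while
`|w_1|, |w'_1| ≤ p₁`; hence `w'` additionally inverts the three roots `e_a`, `e_a - e_1` and
`e_a + e_1`. -/

namespace List

lemma sum_take_add_getD_le_sum (ps : List ℕ) (i : ℕ) :
    (ps.take i).sum + ps.getD i 0 ≤ ps.sum := by
  induction ps generalizing i with
  | nil => simp
  | cons a l ih =>
    cases i with
    | zero => simp
    | succ i => simpa [add_assoc] using ih i

lemma getD_zero_le_sum_take (ps : List ℕ) {i : ℕ} (hi : 1 ≤ i) :
    ps.getD 0 0 ≤ (ps.take i).sum := by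
  obtain ⟨j, rfl⟩ := Nat.exists_eq_add_of_le' hi
  cases ps <;> simp

lemma exists_getD_ne_of_ne {α : Type*} {l l' : List α} (d : α)
    (hlen : l.length = l'.length) (hne : l ≠ l') :
    ∃ k < l.length, l.getD k d ≠ l'.getD k d := by
  by_contra! h
  refine hne (ext_getElem hlen fun k h1 h2 => ?_)
  have := h k h1
  rwa [getD_eq_getElem _ _ h1, getD_eq_getElem _ _ h2] at this

end List

namespace SignedPerm

variable {n : ℕ} {u w : Equiv.Perm ℤ}

lemma map_zero (hw : w ∈ SignedPerm n) : w 0 = 0 := by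
  have h := hw.1 0
  rw [neg_zero] at h
  omega

lemma abs_apply_le (hw : w ∈ SignedPerm n) {i : ℤ} (hi : |i| ≤ n) : |w i| ≤ n := by
  by_contra! h
  have hfix : w (w i) = w i := hw.2 _ h
  rw [w.injective hfix] at h
  omega

lemma apply_ne_zero (hw : w ∈ SignedPerm n) {i : ℤ} (hi : i ≠ 0) : w i ≠ 0 := by
  rw [← map_zero hw]
  exact w.injective.ne hi

lemma apply_add_apply_ne_zero (hw : w ∈ SignedPerm n) {i j : ℤ} (hij : i + j ≠ 0) :
    w i + w j ≠ 0 := by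
  intro h
  have : w i = w (-j) := by rw [hw.1]; omega
  have := w.injective this
  omega

lemma mul_mem (hu : u ∈ SignedPerm n) (hw : w ∈ SignedPerm n) : u * w ∈ SignedPerm n :=
  ⟨fun i => by simp only [Equiv.Perm.mul_apply, hw.1, hu.1],
    fun i hi => by simp only [Equiv.Perm.mul_apply, hw.2 i hi, hu.2 i hi]⟩

lemma inv_mem (hw : w ∈ SignedPerm n) : w⁻¹ ∈ SignedPerm n :=
  ⟨fun i => w.injective (by simp [hw.1]), fun i hi => w.injective (by simp [hw.2 i hi])⟩

end SignedPerm

/-- The positive roots of `Bₙ`: `(i, j)` stands for `e_j - e_i`, where `e_0 = 0` and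
`e_{-k} = -e_k`, and `w` sends it to `e_{w j} - e_{w i}`. -/
noncomputable def posRoots (n : ℕ) : Finset (ℤ × ℤ) :=
  ((Icc (-(n : ℤ)) n) ×ˢ (Icc 1 (n : ℤ))).filter fun p => -p.2 < p.1 ∧ p.1 < p.2

noncomputable def rootInversions (n : ℕ) (w : Equiv.Perm ℤ) : Finset (ℤ × ℤ) :=
  (posRoots n).filter fun p => w p.2 < w p.1

section Roots

variable {n : ℕ} {w : Equiv.Perm ℤ}

lemma mem_posRoots {p : ℤ × ℤ} :
    p ∈ posRoots n ↔ 1 ≤ p.2 ∧ p.2 ≤ n ∧ -p.2 < p.1 ∧ p.1 < p.2 := by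
  simp only [posRoots, mem_filter, mem_product, mem_Icc]
  omega

lemma mem_rootInversions {p : ℤ × ℤ} :
    p ∈ rootInversions n w ↔ p ∈ posRoots n ∧ w p.2 < w p.1 :=
  mem_filter

lemma card_eq_card_filter_pos_add_card_filter_zero_add_card_filter_neg (s : Finset (ℤ × ℤ)) :
    #s = #(s.filter fun p => 0 < p.1) + #(s.filter fun p => p.1 = 0) +
      #(s.filter fun p => p.1 < 0) := by
  rw [← card_union_of_disjoint (disjoint_filter.2 fun _ _ h h' => by omega), ← filter_or,
    ← card_union_of_disjoint (disjoint_filter.2 fun _ _ h h' => by omega), ← filter_or,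
    filter_true_of_mem fun p _ => by omega]

/-- The roots `e_j - e_i` with `i > 0`, `i = 0`, `i < 0` inverted by `w` are its inversions,
its negative entries and its negative sum pairs. -/
lemma card_rootInversions (hw : w ∈ SignedPerm n) : #(rootInversions n w) = blen n w := by
  have hodd := hw.1
  have hzero := SignedPerm.map_zero hw
  have hinv : #((rootInversions n w).filter fun p => 0 < p.1) = #(InvSet n w) := by
    congr 1
    ext p
    simp only [mem_filter, mem_rootInversions, mem_posRoots, InvSet, mem_product, mem_Icc]
    omega
  have hnega : #((rootInversions n w).filter fun p => p.1 = 0) = #(NegaSet n w) := by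
    refine card_nbij' Prod.snd (fun j => (0, j)) ?_ ?_ ?_ ?_ <;>
      simp +contextual only [Set.MapsTo, Set.LeftInvOn, Set.RightInvOn, coe_filter,
        Set.mem_ofPred_eq, mem_rootInversions, mem_posRoots, NegaSet, mem_Icc, Prod.forall,
        hzero] <;> grind
  have hnsp : #((rootInversions n w).filter fun p => p.1 < 0) = #(NspSet n w) := by
    refine card_nbij' (fun p => (-p.1, p.2)) (fun p => (-p.1, p.2)) ?_ ?_ ?_ ?_ <;>
      simp +contextual only [Set.MapsTo, Set.LeftInvOn, Set.RightInvOn, coe_filter,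
        Set.mem_ofPred_eq, mem_rootInversions, mem_posRoots, NspSet, mem_product, mem_Icc,
        Prod.forall, neg_neg, hodd] <;> grind
  rw [card_eq_card_filter_pos_add_card_filter_zero_add_card_filter_neg, blen, hinv, hnega, hnsp]

end Roots

/-- The positive root among `±(e_d - e_c)`, for `p = (c, d)` with `c ≠ ±d`. -/
def normRoot (p : ℤ × ℤ) : ℤ × ℤ :=
  if 0 < p.1 + p.2 then (min p.1 p.2, max p.1 p.2) else (-max p.1 p.2, -min p.1 p.2)

/-- The positive root `±w(e_j - e_i)`, for `p = (i, j)`. -/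
def rootMap (w : Equiv.Perm ℤ) (p : ℤ × ℤ) : ℤ × ℤ :=
  normRoot (w p.1, w p.2)

section RootMap

variable {n : ℕ} {u x : Equiv.Perm ℤ}

lemma normRoot_swap (c d : ℤ) : normRoot (d, c) = normRoot (c, d) := by
  simp [normRoot, min_comm, max_comm, add_comm]

lemma normRoot_neg (c d : ℤ) : normRoot (-c, -d) = normRoot (c, d) := by
  rcases le_total c d with h | h <;> by_cases hs : 0 < c + d <;> by_cases hs' : 0 < -c + -d <;>
    simp [normRoot, hs, hs', h] <;> omega

lemma normRoot_eq_or (c d : ℤ) :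
    normRoot (c, d) = (c, d) ∨ normRoot (c, d) = (d, c) ∨ normRoot (c, d) = (-c, -d) ∨
      normRoot (c, d) = (-d, -c) := by
  rcases le_total c d with h | h <;> by_cases hs : 0 < c + d <;> simp [normRoot, hs, h]

lemma normRoot_of_mem_posRoots {p : ℤ × ℤ} (hp : p ∈ posRoots n) : normRoot p = p := by
  rw [mem_posRoots] at hp
  simp [normRoot, show 0 < p.1 + p.2 by omega, min_eq_left hp.2.2.2.le,
    max_eq_right hp.2.2.2.le]

lemma normRoot_mem_posRoots {c d : ℤ} (hne : c ≠ d) (hs : c + d ≠ 0) (hc : |c| ≤ n)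
    (hd : |d| ≤ n) : normRoot (c, d) ∈ posRoots n := by
  rw [abs_le] at hc hd
  rcases le_total c d with h | h <;> by_cases hs' : 0 < c + d <;>
    simp [normRoot, hs', h, mem_posRoots] <;> omega

lemma normRoot_map_normRoot {g : ℤ → ℤ} (hg : ∀ i, g (-i) = -g i) (c d : ℤ) :
    normRoot (g (normRoot (c, d)).1, g (normRoot (c, d)).2) = normRoot (g c, g d) := by
  rcases normRoot_eq_or c d with h | h | h | h <;> rw [h] <;>
    simp only [hg, normRoot_neg, normRoot_swap]

lemma rootMap_mem (hu : u ∈ SignedPerm n) {p : ℤ × ℤ} (hp : p ∈ posRoots n) :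
    rootMap u p ∈ posRoots n := by
  rw [mem_posRoots] at hp
  exact normRoot_mem_posRoots (u.injective.ne (by omega))
    (SignedPerm.apply_add_apply_ne_zero hu (by omega))
    (SignedPerm.abs_apply_le hu (abs_le.2 ⟨by omega, by omega⟩))
    (SignedPerm.abs_apply_le hu (abs_le.2 ⟨by omega, by omega⟩))

lemma rootMap_inv_rootMap (hu : u ∈ SignedPerm n) {p : ℤ × ℤ} (hp : p ∈ posRoots n) :
    rootMap u⁻¹ (rootMap u p) = p := by
  rw [rootMap, rootMap, normRoot_map_normRoot (SignedPerm.inv_mem hu).1]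
  simpa using normRoot_of_mem_posRoots hp

lemma apply_lt_apply_iff_normRoot (hx : ∀ i, x (-i) = -x i) {c d : ℤ} (hne : c ≠ d)
    (hs : c + d ≠ 0) :
    x d < x c ↔ (d < c ↔ ¬ x (normRoot (c, d)).2 < x (normRoot (c, d)).1) := by
  have hxne : x c ≠ x d := x.injective.ne hne
  rcases lt_or_gt_of_ne hne with h | h <;> rcases lt_or_gt_of_ne hs with hs' | hs' <;>
    simp [normRoot, hs', not_lt.2 hs'.le, h.le, hx] <;> omega

end RootMap

section WeakOrder

variable {n : ℕ} {u v x : Equiv.Perm ℤ}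

lemma mem_rootInversions_mul_iff (hx : x ∈ SignedPerm n) (hu : u ∈ SignedPerm n)
    {p : ℤ × ℤ} (hp : p ∈ posRoots n) :
    p ∈ rootInversions n (x * u) ↔
      (p ∈ rootInversions n u ↔ rootMap u p ∉ rootInversions n x) := by
  have hp' := mem_posRoots.1 hp
  simp only [mem_rootInversions, hp, rootMap_mem hu hp, true_and, Equiv.Perm.mul_apply]
  exact apply_lt_apply_iff_normRoot hx.1 (u.injective.ne (by omega))
    (SignedPerm.apply_add_apply_ne_zero hu (by omega))

lemma card_filter_rootMap_mem_rootInversions (hu : u ∈ SignedPerm n) :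
    #((posRoots n).filter fun p => rootMap u p ∈ rootInversions n x) =
      #(rootInversions n x) := by
  refine card_nbij' (rootMap u) (rootMap u⁻¹) ?_ ?_ ?_ ?_
  · intro p hp
    exact (mem_filter.1 hp).2
  · intro q hq
    have hq' := (mem_filter.1 hq).1
    have := rootMap_inv_rootMap (SignedPerm.inv_mem hu) hq'
    rw [inv_inv] at this
    simpa [this, rootMap_mem (SignedPerm.inv_mem hu) hq'] using hq
  · intro p hp
    exact rootMap_inv_rootMap hu (mem_filter.1 hp).1
  · intro q hq
    simpa using rootMap_inv_rootMap (SignedPerm.inv_mem hu) (mem_filter.1 hq).1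

/-- Writing `v = x u`, the root inversions of `v` are the symmetric difference of those of
`u` and the `u`-preimage `T` of those of `x`; the length condition forces `T` to miss those
of `u`. -/
lemma rootInversions_subset_of_wle (hu : u ∈ SignedPerm n) (hv : v ∈ SignedPerm n)
    (h : wle n u v) : rootInversions n u ⊆ rootInversions n v := by
  have hx := SignedPerm.mul_mem hv (SignedPerm.inv_mem hu)
  set S := rootInversions n u
  set T := (posRoots n).filter fun p => rootMap u p ∈ rootInversions n (v * u⁻¹)
  have hmem : ∀ p ∈ posRoots n, p ∈ rootInversions n v ↔ (p ∈ S ↔ p ∉ T) := by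
    intro p hp
    simpa [T, hp] using mem_rootInversions_mul_iff hx hu hp
  have hsub : rootInversions n v ⊆ (S ∪ T) \ (S ∩ T) := by
    intro p hpv
    have := (hmem p (mem_filter.1 hpv).1).1 hpv
    simp only [mem_sdiff, mem_union, mem_inter]
    tauto
  have hcard : #(rootInversions n v) = #S + #T := by
    rw [card_filter_rootMap_mem_rootInversions hu, card_rootInversions hu, card_rootInversions hv,
      card_rootInversions hx]
    exact h
  have hdisj : #(S ∩ T) = 0 := by
    have := card_le_card hsub
    rw [card_sdiff_of_subset inter_subset_union] at this
    have := card_union_add_card_inter S T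
    omega
  intro p hpS
  have hpT : p ∉ T := fun hpT => by
    simpa [hdisj] using card_pos.2 ⟨p, mem_inter.2 ⟨hpS, hpT⟩⟩
  exact (hmem p (mem_filter.1 hpS).1).2 (iff_of_true hpS hpT)

end WeakOrder

lemma apply_neg_of_rootInversions_subset {n : ℕ} {w w' : Equiv.Perm ℤ} (hw : w ∈ SignedPerm n)
    (hw' : w' ∈ SignedPerm n) (hsub : rootInversions n w ⊆ rootInversions n w') {a : ℤ}
    (ha1 : 1 ≤ a) (ha : a ≤ n) (hwa : w a < 0) : w' a < 0 := by
  have := @hsub (0, a)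
  simp only [mem_rootInversions, mem_posRoots, SignedPerm.map_zero hw,
    SignedPerm.map_zero hw'] at this
  exact (this ⟨⟨ha1, ha, by omega, by omega⟩, hwa⟩).2

/-- A position `a` turning negative above a smaller position `b` adds the three root
inversions `e_a`, `e_a - e_b` and `e_a + e_b`. -/
lemma blen_add_three_le {n : ℕ} {w w' : Equiv.Perm ℤ} (hw : w ∈ SignedPerm n)
    (hw' : w' ∈ SignedPerm n) (hsub : rootInversions n w ⊆ rootInversions n w') {a b : ℤ}
    (hb : 1 ≤ b) (hba : b < a) (ha : a ≤ n) (hwa : |w b| < w a) (hw'a : w' a < -|w' b|) :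
    blen n w + 3 ≤ blen n w' := by
  have hnew : {(0, a), (b, a), (-b, a)} ⊆ rootInversions n w' \ rootInversions n w := by
    have hwb : -|w b| ≤ w b ∧ w b ≤ |w b| := abs_le.1 le_rfl
    have hw'b : -|w' b| ≤ w' b ∧ w' b ≤ |w' b| := abs_le.1 le_rfl
    intro p hp
    simp only [mem_insert, mem_singleton] at hp
    rcases hp with rfl | rfl | rfl <;>
      simp only [mem_sdiff, mem_rootInversions, mem_posRoots, SignedPerm.map_zero hw,
        SignedPerm.map_zero hw', hw.1, hw'.1] <;> omega
  have hcard : #({(0, a), (b, a), (-b, a)} : Finset (ℤ × ℤ)) = 3 :=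
    card_eq_three.2 ⟨_, _, _, by simp; omega, by simp; omega, by simp; omega, rfl⟩
  rw [← card_rootInversions hw, ← card_rootInversions hw',
    ← card_sdiff_add_card_eq_card hsub, add_comm _ 3, ← hcard]
  exact Nat.add_le_add_right (card_le_card hnew) _

lemma shiftFun_zero (b : ℤ) : shiftFun 0 b = b := by
  unfold shiftFun
  split_ifs <;> omega

lemma lt_abs_shiftFun (p : ℕ) {b : ℤ} (hb : b ≠ 0) : (p : ℤ) < |shiftFun p b| := by
  unfold shiftFun
  split_ifs <;> rw [lt_abs] <;> omega

lemma shiftFun_neg_iff (p : ℕ) (b : ℤ) : shiftFun p b < 0 ↔ b < 0 := by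
  unfold shiftFun
  split_ifs <;> omega

section Components

variable {ps : List ℕ} {us : List (Equiv.Perm ℤ)} {w : Equiv.Perm ℤ}

lemma IsMultiSProd.apply_sum_take_add (h : IsMultiSProd ps us w) {i : ℕ} (hi : i < ps.length)
    {m : ℤ} (hm1 : 1 ≤ m) (hm : m ≤ ps.getD i 0) :
    w ((ps.take i).sum + m) = shiftFun (ps.take i).sum ((us.getD i 1) m) := by
  simpa using (h.2.2 i hi).2 ((ps.take i).sum + m) (by omega) (by omega)

lemma IsMultiSProd.lt_abs_apply_sum_take_add (h : IsMultiSProd ps us w) {i : ℕ}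
    (hi : i < ps.length) {m : ℤ} (hm1 : 1 ≤ m) (hm : m ≤ ps.getD i 0) :
    ((ps.take i).sum : ℤ) < |w ((ps.take i).sum + m)| := by
  rw [h.apply_sum_take_add hi hm1 hm]
  exact lt_abs_shiftFun _ (SignedPerm.apply_ne_zero (h.2.2 i hi).1 (by omega))

lemma IsMultiSProd.abs_apply_one_le (h : IsMultiSProd ps us w) (h0 : 0 < ps.getD 0 0) :
    |w 1| ≤ ps.getD 0 0 := by
  have hlen : 0 < ps.length := by
    rcases ps with _ | _ <;> simp_all
  have := h.apply_sum_take_add hlen le_rfl (by omega)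
  simp only [List.take_zero, List.sum_nil, CharP.cast_eq_zero, zero_add, shiftFun_zero] at this
  rw [this]
  exact SignedPerm.abs_apply_le (h.2.2 0 hlen).1 (by rw [abs_one]; exact_mod_cast h0)

lemma IsMultiSProd.apply_sum_take_add_neg_iff (h : IsMultiSProd ps us w) {i : ℕ}
    (hi : i < ps.length) {m : ℤ} (hm1 : 1 ≤ m) (hm : m ≤ ps.getD i 0) :
    w ((ps.take i).sum + m) < 0 ↔ m ∈ NegaSet (ps.getD i 0) (us.getD i 1) := by
  rw [h.apply_sum_take_add hi hm1 hm, shiftFun_neg_iff, NegaSet, mem_filter, mem_Icc]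
  tauto

end Components

lemma ValidLs.exists_mem_not_iff_of_ne {ps : List ℕ} {Ls Ls' : List (Finset ℤ)}
    (hLs : ValidLs ps Ls) (hLs' : ValidLs ps Ls') (hne : Ls ≠ Ls') :
    ∃ i, 1 ≤ i ∧ i < ps.length ∧ ∃ m : ℤ, 1 ≤ m ∧ m ≤ ps.getD i 0 ∧
      ¬(m ∈ Ls.getD (i - 1) ∅ ↔ m ∈ Ls'.getD (i - 1) ∅) := by
  obtain ⟨k, hk, hLk⟩ := List.exists_getD_ne_of_ne ∅ (hLs.1.trans hLs'.1.symm) hne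
  obtain ⟨m, hm⟩ : ∃ m, ¬(m ∈ Ls.getD k ∅ ↔ m ∈ Ls'.getD k ∅) := by
    by_contra! h
    exact hLk (Finset.ext h)
  have hk' : k < ps.length - 1 := hLs.1 ▸ hk
  have hm_range : m ∈ Icc 1 (ps.getD (k + 1) 0 : ℤ) := by
    by_cases hmL : m ∈ Ls.getD k ∅
    · exact hLs.2 k hk' hmL
    · exact hLs'.2 k hk' (by tauto)
  rw [mem_Icc] at hm_range
  exact ⟨k + 1, by omega, by omega, m, hm_range.1, hm_range.2, by simpa using hm⟩

theorem different_components_length_gap_general (ps : List ℕ)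
    (hpos : ∀ x ∈ ps, 0 < x) (Ls Ls' : List (Finset ℤ))
    (hLs : ValidLs ps Ls) (hLs' : ValidLs ps Ls') (hne : Ls ≠ Ls')
    (w w' : Equiv.Perm ℤ) (hw : w ∈ ComponentSet ps Ls) (hw' : w' ∈ ComponentSet ps Ls')
    (hlt : wle ps.sum w w') :
    blen ps.sum w + 3 ≤ blen ps.sum w' := by
  obtain ⟨us, hus, hL⟩ := hw
  obtain ⟨us', hus', hL'⟩ := hw'
  have hsub := rootInversions_subset_of_wle hus.1 hus'.1 hlt
  obtain ⟨i, hi1, hi, m, hm1, hm, hm_diff⟩ := hLs.exists_mem_not_iff_of_ne hLs' hne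
  have hp₁ : 0 < ps.getD 0 0 :=
    hpos _ (by rw [List.getD_eq_getElem _ _ (by omega)]; exact List.getElem_mem _)
  have hp₁_le := List.getD_zero_le_sum_take ps hi1
  have hblock_le := List.sum_take_add_getD_le_sum ps i
  have h1 := hus.abs_apply_one_le hp₁
  have h1' := hus'.abs_apply_one_le hp₁
  have hgap := hus.lt_abs_apply_sum_take_add hi hm1 hm
  have hgap' := hus'.lt_abs_apply_sum_take_add hi hm1 hm
  have hneg := hus.apply_sum_take_add_neg_iff hi hm1 hm
  have hneg' := hus'.apply_sum_take_add_neg_iff hi hm1 hm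
  rw [hL i hi1 hi] at hneg
  rw [hL' i hi1 hi] at hneg'
  set a := ((ps.take i).sum : ℤ) + m with ha
  have hmono := apply_neg_of_rootInversions_subset hus.1 hus'.1 hsub (a := a) (by omega)
    (by omega)
  have hwa : ¬ w a < 0 := fun hwa => hm_diff (iff_of_true (hneg.1 hwa) (hneg'.1 (hmono hwa)))
  have hw'a : w' a < 0 := by tauto
  rw [abs_of_nonneg (not_lt.1 hwa)] at hgap
  rw [abs_of_neg hw'a] at hgap'
  exact blen_add_three_le hus.1 hus'.1 hsub (b := 1) (a := a) le_rfl (by omega) (by omega)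
    (by omega) (by omega)

/-- If `w < w'` in the weak order on `𝔅_n` lie in components indexed by
different tuples `(L₂,…,L_k) ≠ (L₂',…,L_k')`, then `ℓ(w') − ℓ(w) ≥ 3`. -/
theorem different_components_length_gap (ps : List ℕ) (hk : 2 ≤ ps.length)
    (hpos : ∀ x ∈ ps, 0 < x) (Ls Ls' : List (Finset ℤ))
    (hLs : ValidLs ps Ls) (hLs' : ValidLs ps Ls') (hne : Ls ≠ Ls')
    (w w' : Equiv.Perm ℤ) (hw : w ∈ ComponentSet ps Ls) (hw' : w' ∈ ComponentSet ps Ls')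
    (hlt : wle ps.sum w w') (hneq : w ≠ w') :
    blen ps.sum w + 3 ≤ blen ps.sum w' :=
  different_components_length_gap_general ps hpos Ls Ls' hLs hLs' hne w w' hw hw' hlt
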